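/- Let (X,d) be a metric space with a Borel measure m satisfying the symmetric Vitali property on an open set, and suppose m(B(x,r)) ≥ (1-ε)ω_n rⁿ for all balls B(x,r) contained in an open set Ω. Then m(Ω) ≥ (1-ε)·Hⁿ(Ω). -/

import Mathlib

/-!
Disjoint small balls inside `Ω` given by the Vitali property have, by the lower bound on their
measure, total gauge `ω_n rⁿ ≥ ω_n (diam / 2)ⁿ` at most `m(Ω) / (1 - ε)`. What they miss is
`m`-null, and the same lower bound together with the `5r`-covering lemma covers an `m`-null
subset of `Ω` by small balls of arbitrarily small total gauge. Letting the radii tend to `0`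
bounds `(1 - ε) Hⁿ(Ω)` by `m(Ω)`.
-/

open MeasureTheory Metric

/-- The volume of the unit ball in `ℝⁿ`. -/
noncomputable def eucVol (n : ℕ) : ENNReal :=
  MeasureTheory.volume (Metric.ball (0 : EuclideanSpace ℝ (Fin n)) 1)

/-- The `n`-dimensional Hausdorff measure, normalized so that it coincides with
Lebesgue measure on `ℝⁿ` (gauge `ω_n (diam/2)ⁿ`). -/
noncomputable def hausdorffN (n : ℕ) {X : Type*} [EMetricSpace X] [MeasurableSpace X]
    [BorelSpace X] : Measure X :=
  (eucVol n / 2 ^ n) • MeasureTheory.Measure.hausdorffMeasure (n : ℝ)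

/-- The symmetric Vitali property of a measure `m` on a set `Ω`: from every fine cover
of `Ω` by closed balls centered at points of `Ω` one can extract a countable pairwise
disjoint subfamily covering `Ω` up to an `m`-null set. -/
def SymmetricVitaliProperty {X : Type*} [MetricSpace X] [MeasurableSpace X]
    (m : Measure X) (Ω : Set X) : Prop :=
  ∀ F : Set (X × ℝ),
    (∀ p ∈ F, p.1 ∈ Ω ∧ 0 < p.2) →
    (∀ x ∈ Ω, ∀ δ : ℝ, 0 < δ → ∃ p ∈ F, p.1 = x ∧ p.2 ≤ δ) →
    ∃ G ⊆ F, G.Countable ∧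
      (G.PairwiseDisjoint fun p => Metric.closedBall p.1 p.2) ∧
      m (Ω \ ⋃ p ∈ G, Metric.closedBall p.1 p.2) = 0

open Filter Set Topology
open scoped ENNReal

section Covers

variable {X : Type*} [MetricSpace X]

def IsClosedBallCover (δ : ℝ) (s : Set X) (P : Set (X × ℝ)) : Prop :=
  P.Countable ∧ (∀ p ∈ P, 0 ≤ p.2 ∧ p.2 ≤ δ) ∧ s ⊆ ⋃ p ∈ P, closedBall p.1 p.2

theorem IsClosedBallCover.union {δ : ℝ} {s t : Set X} {P Q : Set (X × ℝ)}
    (hP : IsClosedBallCover δ s P) (hQ : IsClosedBallCover δ t Q) :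
    IsClosedBallCover δ (s ∪ t) (P ∪ Q) := by
  refine ⟨hP.1.union hQ.1, fun p hp => hp.elim (hP.2.1 p) (hQ.2.1 p), ?_⟩
  rw [biUnion_union]
  exact union_subset_union hP.2.2 hQ.2.2

theorem IsClosedBallCover.mono {δ : ℝ} {s t : Set X} {P : Set (X × ℝ)}
    (h : IsClosedBallCover δ t P) (hst : s ⊆ t) : IsClosedBallCover δ s P :=
  ⟨h.1, h.2.1, hst.trans h.2.2⟩

theorem ediam_closedBall_le_two_mul_ofReal (x : X) {r : ℝ} (hr : 0 ≤ r) :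
    ediam (closedBall x r) ≤ 2 * ENNReal.ofReal r := by
  rw [← closedEBall_ofReal hr]
  exact ediam_closedEBall_le

theorem div_two_pow_mul_ediam_closedBall_rpow_le (b : ℝ≥0∞) (n : ℕ) (x : X) {r : ℝ}
    (hr : 0 ≤ r) : b / 2 ^ n * ediam (closedBall x r) ^ (n : ℝ) ≤ b * ENNReal.ofReal r ^ n :=
  calc b / 2 ^ n * ediam (closedBall x r) ^ (n : ℝ)
      ≤ b / 2 ^ n * (2 * ENNReal.ofReal r) ^ n := by
        rw [ENNReal.rpow_natCast]
        gcongr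
        exact ediam_closedBall_le_two_mul_ofReal x hr
    _ = b * ENNReal.ofReal r ^ n := by
        rw [mul_pow, ← mul_assoc, ENNReal.div_mul_cancel (by simp) (by simp)]

theorem div_two_pow_mul_hausdorffMeasure_le [MeasurableSpace X] [BorelSpace X] {n : ℕ}
    {s : Set X} {b M : ℝ≥0∞}
    (h : ∀ δ : ℝ, 0 < δ → ∃ P, IsClosedBallCover δ s P ∧
      b * ∑' p : P, ENNReal.ofReal p.1.2 ^ n ≤ M) :
    b / 2 ^ n * μH[n] s ≤ M := by
  choose P hP hPM using fun k : ℕ => h (1 / (k + 1)) (by positivity)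
  have := fun k => (hP k).1.to_subtype
  have hr : Tendsto (fun k : ℕ => 2 * ENNReal.ofReal (1 / (k + 1))) atTop (𝓝 0) := by
    simpa using ENNReal.Tendsto.const_mul
      (ENNReal.tendsto_ofReal tendsto_one_div_add_atTop_nhds_zero_nat) (.inr ENNReal.ofNat_ne_top)
  have hμH := Measure.hausdorffMeasure_le_liminf_tsum (n : ℝ) s _ hr
    (fun k (p : P k) => closedBall p.1.1 p.1.2)
    (.of_forall fun k p => (ediam_closedBall_le_two_mul_ofReal _ ((hP k).2.1 p p.2).1).trans
      (by gcongr; exact ((hP k).2.1 p p.2).2))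
    (.of_forall fun k => by simpa only [iUnion_subtype] using (hP k).2.2)
  calc b / 2 ^ n * μH[n] s
      ≤ b / 2 ^ n * liminf (fun k => ∑' p : P k, ediam (closedBall p.1.1 p.1.2) ^ (n : ℝ))
          atTop := by gcongr
    _ ≤ liminf (fun k => b / 2 ^ n * ∑' p : P k, ediam (closedBall p.1.1 p.1.2) ^ (n : ℝ))
          atTop := by
        simpa [liminf_const, Pi.mul_def] using
          ENNReal.le_liminf_mul (f := atTop) (u := fun _ => b / 2 ^ n)
            (v := fun k => ∑' p : P k, ediam (closedBall p.1.1 p.1.2) ^ (n : ℝ))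
    _ ≤ M := by
        refine liminf_le_of_frequently_le' (.of_forall fun k => ?_)
        rw [← ENNReal.tsum_mul_left]
        refine (ENNReal.tsum_le_tsum fun p =>
          div_two_pow_mul_ediam_closedBall_rpow_le b n _ ((hP k).2.1 _ p.2).1).trans ?_
        rw [ENNReal.tsum_mul_left]
        exact hPM k

end Covers

theorem SymmetricVitaliProperty.exists_disjoint_closedBall_subfamily {X : Type*} [MetricSpace X]
    [MeasurableSpace X] {m : Measure X} {Ω : Set X}
    (hv : SymmetricVitaliProperty m Ω) (hΩ : IsOpen Ω) {δ : ℝ} (hδ : 0 < δ) :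
    ∃ G : Set (X × ℝ), G.Countable ∧ (∀ p ∈ G, 0 < p.2 ∧ p.2 ≤ δ ∧ closedBall p.1 p.2 ⊆ Ω) ∧
      (G.PairwiseDisjoint fun p => closedBall p.1 p.2) ∧
      m (Ω \ ⋃ p ∈ G, closedBall p.1 p.2) = 0 := by
  set F : Set (X × ℝ) := {p | p.1 ∈ Ω ∧ 0 < p.2 ∧ p.2 ≤ δ ∧ closedBall p.1 p.2 ⊆ Ω}
  have hfine : ∀ x ∈ Ω, ∀ δ' : ℝ, 0 < δ' → ∃ p ∈ F, p.1 = x ∧ p.2 ≤ δ' := by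
    intro x hx δ' hδ'
    obtain ⟨ρ, hρ, hρΩ⟩ := Metric.isOpen_iff.1 hΩ x hx
    have hsub : closedBall x (min (min δ' δ) (ρ / 2)) ⊆ Ω :=
      (closedBall_subset_ball ((min_le_right _ _).trans_lt (half_lt_self hρ))).trans hρΩ
    exact ⟨(x, min (min δ' δ) (ρ / 2)),
      ⟨hx, by positivity, (min_le_left _ _).trans (min_le_right _ _), hsub⟩, rfl,
      (min_le_left _ _).trans (min_le_left _ _)⟩
  obtain ⟨G, hGF, hGc, hGd, hGnull⟩ := hv F (fun p hp => ⟨hp.1, hp.2.1⟩) hfine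
  exact ⟨G, hGc, fun p hp => (hGF hp).2, hGd, hGnull⟩

section LowerBound

variable {X : Type*} [MetricSpace X] [MeasurableSpace X] [BorelSpace X]
  {m : Measure X} {Ω : Set X} {n : ℕ} {c : ℝ≥0∞}

def BallsMeasureAtLeast (m : Measure X) (Ω : Set X) (c : ℝ≥0∞) (n : ℕ) : Prop :=
  ∀ (x : X) (r : ℝ), 0 < r → ball x r ⊆ Ω → c * ENNReal.ofReal r ^ n ≤ m (ball x r)

theorem BallsMeasureAtLeast.mul_tsum_le (hm : BallsMeasureAtLeast m Ω c n)
    {G : Set (X × ℝ)} (hpos : ∀ p ∈ G, 0 < p.2)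
    (hdisj : G.PairwiseDisjoint fun p => ball p.1 p.2) {s : Set X} (hsΩ : s ⊆ Ω)
    (hGs : ∀ p ∈ G, ball p.1 p.2 ⊆ s) :
    c * ∑' p : G, ENNReal.ofReal p.1.2 ^ n ≤ m s :=
  calc c * ∑' p : G, ENNReal.ofReal p.1.2 ^ n
      = ∑' p : G, c * ENNReal.ofReal p.1.2 ^ n := ENNReal.tsum_mul_left.symm
    _ ≤ ∑' p : G, m (ball p.1.1 p.1.2) :=
        ENNReal.tsum_le_tsum fun p => hm _ _ (hpos _ p.2) ((hGs _ p.2).trans hsΩ)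
    _ ≤ m (⋃ p : G, ball p.1.1 p.1.2) :=
        tsum_meas_le_meas_iUnion_of_disjoint m (fun _ => measurableSet_ball) (hdisj.subtype _ _)
    _ ≤ m s := measure_mono (iUnion_subset fun p => hGs _ p.2)

/-- Apply the `5r`-covering lemma to small balls inside an open `U ⊇ Z` with `m (U ∩ Ω) < η`. -/
theorem BallsMeasureAtLeast.exists_cover_mul_tsum_le (hm : BallsMeasureAtLeast m Ω c n)
    (hc : c ≠ 0) (hΩ : IsOpen Ω) (hΩm : m Ω ≠ ∞) {Z : Set X} (hZΩ : Z ⊆ Ω) {η : ℝ≥0∞}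
    (hZη : m Z < η) {δ : ℝ} (hδ : 0 < δ) :
    ∃ P, IsClosedBallCover δ Z P ∧ c * ∑' p : P, ENNReal.ofReal p.1.2 ^ n ≤ 5 ^ n * η := by
  have : IsFiniteMeasure (m.restrict Ω) :=
    ⟨by rwa [Measure.restrict_apply_univ, lt_top_iff_ne_top]⟩
  obtain ⟨U, hZU, hUo, hUη⟩ :=
    Set.exists_isOpen_lt_of_lt Z η ((m.restrict_apply_le Ω Z).trans_lt hZη)
  rw [Measure.restrict_apply hUo.measurableSet] at hUη
  set t : Set (X × ℝ) := {p | p.1 ∈ Z ∧ 0 < p.2 ∧ p.2 ≤ δ / 5 ∧ ball p.1 p.2 ⊆ U ∩ Ω}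
  obtain ⟨u, hut, hud, hucov⟩ := Vitali.exists_disjoint_subfamily_covering_enlargement_closedBall
    t Prod.fst Prod.snd (δ / 5) (fun p hp => hp.2.2.1) 5 (by norm_num)
  have hsum : c * ∑' p : u, ENNReal.ofReal p.1.2 ^ n ≤ m (U ∩ Ω) :=
    hm.mul_tsum_le (fun p hp => (hut hp).2.1) (hud.mono fun _ => ball_subset_closedBall)
      inter_subset_right (fun p hp => (hut hp).2.2.2)
  -- `X` need not be separable: `u` is countable because its gauge sum is finite.
  have hu : u.Countable := by
    have hfin : ∑' p : u, ENNReal.ofReal p.1.2 ^ n ≠ ∞ := fun h => by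
      simpa [h, hc] using hsum.trans_lt hUη
    have hsupp := Summable.countable_support_ennreal hfin
    rw [Function.support_eq_univ (fun p => pow_ne_zero _ (ENNReal.ofReal_pos.2 (hut p.2).2.1).ne')]
      at hsupp
    exact countable_coe_iff.1 (countable_univ_iff.1 hsupp)
  refine ⟨(fun p => (p.1, 5 * p.2)) '' u, ⟨hu.image _, ?_, ?_⟩, ?_⟩
  · rintro _ ⟨p, hp, rfl⟩
    have := (hut hp).2
    constructor <;> dsimp only <;> linarith
  · intro z hz
    obtain ⟨ρ, hρ, hρU⟩ := Metric.isOpen_iff.1 (hUo.inter hΩ) z ⟨hZU hz, hZΩ hz⟩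
    have hr : 0 < min (δ / 5) ρ := lt_min (by positivity) hρ
    obtain ⟨p, hp, hsub⟩ := hucov (z, min (δ / 5) ρ)
      ⟨hz, hr, min_le_left _ _, (ball_subset_ball (min_le_right _ _)).trans hρU⟩
    exact mem_biUnion (mem_image_of_mem _ hp) (hsub (mem_closedBall_self hr.le))
  · have hinj : InjOn (fun p : X × ℝ => (p.1, 5 * p.2)) u := fun p _ q _ h => by
      simp only [Prod.mk.injEq] at h
      exact Prod.ext h.1 (by linarith)
    rw [tsum_image (fun p : X × ℝ => ENNReal.ofReal p.2 ^ n) hinj]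
    simp only [ENNReal.ofReal_mul (by norm_num : (0 : ℝ) ≤ 5), ENNReal.ofReal_ofNat, mul_pow,
      ENNReal.tsum_mul_left]
    calc c * (5 ^ n * ∑' p : u, ENNReal.ofReal p.1.2 ^ n)
        = 5 ^ n * (c * ∑' p : u, ENNReal.ofReal p.1.2 ^ n) := mul_left_comm _ _ _
      _ ≤ 5 ^ n * η := by gcongr; exact hsum.trans hUη.le

theorem BallsMeasureAtLeast.exists_cover_mul_tsum_le_measure_add
    (hm : BallsMeasureAtLeast m Ω c n) (hc : c ≠ 0) (hΩ : IsOpen Ω) (hΩm : m Ω ≠ ∞)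
    (hv : SymmetricVitaliProperty m Ω) {η : ℝ≥0∞} (hη : 0 < η) {δ : ℝ} (hδ : 0 < δ) :
    ∃ P, IsClosedBallCover δ Ω P ∧ c * ∑' p : P, ENNReal.ofReal p.1.2 ^ n ≤ m Ω + η := by
  obtain ⟨G, hGc, hG, hGd, hGnull⟩ := hv.exists_disjoint_closedBall_subfamily hΩ hδ
  have hGcover : IsClosedBallCover δ (⋃ p ∈ G, closedBall p.1 p.2) G :=
    ⟨hGc, fun p hp => ⟨(hG p hp).1.le, (hG p hp).2.1⟩, subset_rfl⟩
  have hGsum : c * ∑' p : G, ENNReal.ofReal p.1.2 ^ n ≤ m Ω :=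
    hm.mul_tsum_le (fun p hp => (hG p hp).1) (hGd.mono fun _ => ball_subset_closedBall)
      subset_rfl (fun p hp => ball_subset_closedBall.trans (hG p hp).2.2)
  have h5 : (5 : ℝ≥0∞) ^ n ≠ 0 := pow_ne_zero _ (by norm_num)
  obtain ⟨Q, hQ, hQsum⟩ := hm.exists_cover_mul_tsum_le hc hΩ hΩm sdiff_subset
    (hGnull.trans_lt (ENNReal.div_pos hη.ne' (by simp : (5 : ℝ≥0∞) ^ n ≠ ∞))) hδ
  refine ⟨G ∪ Q, (hGcover.union hQ).mono (by rw [union_sdiff_self]; exact subset_union_right), ?_⟩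
  calc c * ∑' p : ↑(G ∪ Q), ENNReal.ofReal p.1.2 ^ n
      ≤ c * ∑' p : G, ENNReal.ofReal p.1.2 ^ n + c * ∑' p : Q, ENNReal.ofReal p.1.2 ^ n := by
        rw [← mul_add]
        gcongr
        exact ENNReal.tsum_union_le (fun p : X × ℝ => ENNReal.ofReal p.2 ^ n) G Q
    _ ≤ m Ω + η := by
        gcongr
        exact hQsum.trans_eq (ENNReal.mul_div_cancel h5 (by simp))

end LowerBound

theorem stmt3_general {X : Type*} [MetricSpace X] [MeasurableSpace X] [BorelSpace X]
    (n : ℕ) (m : Measure X) (ε : ℝ)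
    (Ω : Set X) (hΩ : IsOpen Ω)
    (hvitali : SymmetricVitaliProperty m Ω)
    (hball : ∀ (x : X) (r : ℝ), 0 < r → Metric.ball x r ⊆ Ω →
      ENNReal.ofReal (1 - ε) * eucVol n * ENNReal.ofReal r ^ n ≤ m (Metric.ball x r)) :
    ENNReal.ofReal (1 - ε) * hausdorffN n Ω ≤ m Ω := by
  obtain hΩm | hΩm := eq_or_ne (m Ω) ∞
  · simp [hΩm]
  obtain hε | hε := eq_or_ne (ENNReal.ofReal (1 - ε)) 0
  · simp [hε]
  have hc : ENNReal.ofReal (1 - ε) * eucVol n ≠ 0 :=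
    mul_ne_zero hε (measure_ball_pos volume _ one_pos).ne'
  have hm : BallsMeasureAtLeast m Ω (ENNReal.ofReal (1 - ε) * eucVol n) n := hball
  rw [hausdorffN, Measure.smul_apply, smul_eq_mul, ← mul_assoc, ← mul_div_assoc]
  refine ENNReal.le_of_forall_pos_le_add fun η hη _ => div_two_pow_mul_hausdorffMeasure_le ?_
  exact fun δ hδ => hm.exists_cover_mul_tsum_le_measure_add hc hΩ hΩm hvitali
    (ENNReal.coe_pos.2 hη) hδ

/-- if `m` has the symmetric Vitali property on an open set `Ω` and
`m(B(x,r)) ≥ (1-ε) ω_n rⁿ` for all balls contained in `Ω`, then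
`m(Ω) ≥ (1-ε)·Hⁿ(Ω)`. -/
theorem stmt3 {X : Type*} [MetricSpace X] [MeasurableSpace X] [BorelSpace X]
    (n : ℕ) (m : Measure X) (ε : ℝ) (hε : 0 < ε)
    (Ω : Set X) (hΩ : IsOpen Ω)
    (hvitali : SymmetricVitaliProperty m Ω)
    (hball : ∀ (x : X) (r : ℝ), 0 < r → Metric.ball x r ⊆ Ω →
      ENNReal.ofReal (1 - ε) * eucVol n * ENNReal.ofReal r ^ n ≤ m (Metric.ball x r)) :
    ENNReal.ofReal (1 - ε) * hausdorffN n Ω ≤ m Ω :=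
  stmt3_general n m ε Ω hΩ hvitali hball
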